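/- arXiv:1103.3745 — 9 statements merged into one kernel-verified Lean document; each statement's English description precedes it below -/
import Mathlib

section
/- Let n ≥ 1, let E be a transitive and irreflexive relation on the index set {1,…,n}, and let each variable X_i have a nonempty integer interval domain [min_i, max_i] that is preprocessed with respect to E, i.e., min_i ≤ min_j and max_i ≤ max_j for every (i,j) ∈ E. If there exists an injective assignment x with x_i ∈ [min_i, max_i] for all i (a solution of the AllDifferent constraint alone), then there exists an injective assignment x with x_i ∈ [min_i, max_i] for all i and additionally x_i < x_j for every (i,j) ∈ E (a solution of AllDiffPrec). -/
/-!
Rank the indices by their number of `E`-predecessors; by transitivity and irreflexivity this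
rank strictly increases along `E`. Among the (finitely many) `AllDifferent` solutions take one
maximising the rank-weighted sum `∑ r k * x k`. If it violated some `(i, j) ∈ E`, i.e.
`x j < x i`, then swapping the values of `i` and `j` would keep every value in its domain
(this is where preprocessing is used) and increase the weighted sum by
`(r j - r i) * (x i - x j) > 0`.
-/

open Finset

section
variable {ι : Type*}

open Classical in
noncomputable def predCount [Fintype ι] (E : ι → ι → Prop) (i : ι) : ℕ :=
  #{k | E k i}

theorem predCount_lt_predCount [Fintype ι] {E : ι → ι → Prop} (hTrans : Transitive E)
    (hIrrefl : Irreflexive E) {i j : ι} (hij : E i j) : predCount E i < predCount E j := by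
  classical
  unfold predCount
  apply card_lt_card
  rw [ssubset_iff_of_subset fun k hk => by
    simp only [mem_filter_univ] at hk ⊢
    exact hTrans hk hij]
  exact ⟨i, by simpa using hij, by simpa using hIrrefl i⟩

theorem sum_mul_comp_swap_sub_sum_mul [Fintype ι] [DecidableEq ι] (w x : ι → ℤ) {i j : ι}
    (hij : i ≠ j) :
    ∑ k, w k * x (Equiv.swap i j k) - ∑ k, w k * x k = (w j - w i) * (x i - x j) := by
  rw [← sum_sub_distrib, Fintype.sum_eq_add i j hij fun k hk => by
    rw [Equiv.swap_apply_of_ne_of_ne hk.1 hk.2, sub_self]]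
  simp only [Equiv.swap_apply_left, Equiv.swap_apply_right]
  ring

theorem comp_swap_mem_Icc {α : Type*} [LinearOrder α] [DecidableEq ι] {lo hi x : ι → α}
    {i j : ι} (hlo : lo i ≤ lo j) (hhi : hi i ≤ hi j)
    (hx : ∀ k, x k ∈ Set.Icc (lo k) (hi k))
    (hlt : x j < x i) (k : ι) : x (Equiv.swap i j k) ∈ Set.Icc (lo k) (hi k) := by
  rcases eq_or_ne k i with rfl | hki
  · rw [Equiv.swap_apply_left]
    exact ⟨hlo.trans (hx j).1, hlt.le.trans (hx k).2⟩
  rcases eq_or_ne k j with rfl | hkj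
  · rw [Equiv.swap_apply_right]
    exact ⟨(hx k).1.trans hlt.le, (hx i).2.trans hhi⟩
  · rw [Equiv.swap_apply_of_ne_of_ne hki hkj]
    exact hx k

end

theorem alldiffprec_solution_of_alldifferent_solution_general
    (n : ℕ)
    (E : Fin n → Fin n → Prop)
    (hTrans : Transitive E) (hIrrefl : Irreflexive E)
    (mn mx : Fin n → ℤ)
    (hPre : ∀ i j, E i j → mn i ≤ mn j ∧ mx i ≤ mx j)
    (hAllDiff : ∃ x : Fin n → ℤ, Function.Injective x ∧
      ∀ i, x i ∈ Set.Icc (mn i) (mx i)) :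
    ∃ x : Fin n → ℤ, Function.Injective x ∧
      (∀ i, x i ∈ Set.Icc (mn i) (mx i)) ∧
      ∀ i j, E i j → x i < x j := by
  set S := {x : Fin n → ℤ | Function.Injective x ∧ ∀ i, x i ∈ Set.Icc (mn i) (mx i)}
  have hS : S.Finite := (Set.finite_Icc mn mx).subset fun x hx =>
    ⟨fun i => (hx.2 i).1, fun i => (hx.2 i).2⟩
  obtain ⟨x, ⟨hinj, hdom⟩, hmax⟩ :=
    S.exists_max_image (fun x => ∑ k, (predCount E k : ℤ) * x k) hS hAllDiff
  refine ⟨x, hinj, hdom, fun i j hij => ?_⟩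
  have hne : i ≠ j := fun h => hIrrefl j (h ▸ hij)
  by_contra! hji
  have hlt : x j < x i := hji.lt_of_ne (hinj.ne hne.symm)
  have hswap := hmax (x ∘ Equiv.swap i j)
    ⟨hinj.comp (Equiv.injective _),
      comp_swap_mem_Icc (hPre i j hij).1 (hPre i j hij).2 hdom hlt⟩
  have hgain := sum_mul_comp_swap_sub_sum_mul (fun k => (predCount E k : ℤ)) x hne
  have hrank : (predCount E i : ℤ) < predCount E j :=
    mod_cast predCount_lt_predCount hTrans hIrrefl hij
  simp only [Function.comp_apply] at hswap
  linarith [mul_pos (sub_pos.2 hrank) (sub_pos.2 hlt)]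

/-- If `E` is a transitive irreflexive precedence relation on `{1,…,n}`,
the interval domains `[mn i, mx i]` are nonempty and preprocessed w.r.t. `E`
(`mn i ≤ mn j` and `mx i ≤ mx j` along every edge), and the `AllDifferent`
constraint alone has a solution, then `AllDiffPrec` has a solution. -/
theorem alldiffprec_solution_of_alldifferent_solution
    (n : ℕ) (hn : 1 ≤ n)
    (E : Fin n → Fin n → Prop)
    (hTrans : Transitive E) (hIrrefl : Irreflexive E)
    (mn mx : Fin n → ℤ)
    (hNonempty : ∀ i, mn i ≤ mx i)
    (hPre : ∀ i j, E i j → mn i ≤ mn j ∧ mx i ≤ mx j)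
    (hAllDiff : ∃ x : Fin n → ℤ, Function.Injective x ∧
      ∀ i, x i ∈ Set.Icc (mn i) (mx i)) :
    ∃ x : Fin n → ℤ, Function.Injective x ∧
      (∀ i, x i ∈ Set.Icc (mn i) (mx i)) ∧
      ∀ i j, E i j → x i < x j :=
  alldiffprec_solution_of_alldifferent_solution_general n E hTrans hIrrefl mn mx hPre hAllDiff
end

section
/- Let E be a transitive and irreflexive relation on {1,…,n} and let the variables have nonempty integer interval domains D(X_j) = [min_j, max_j]. Suppose the precedence constraints are bounds consistent, i.e., min_a < min_b and max_a < max_b for every (a,b) ∈ E, and the AllDifferent constraint is bounds consistent, i.e., for every j and every b ∈ {min_j, max_j} there is an injective assignment y with y_k ∈ D(X_k) for all k and y_j = b. Let i be an index, let v ∈ {min_i, max_i}, and let D' be the domains obtained by direct pruning of X_i = v. Then there exists a solution of AllDiffPrec with x_i = v if and only if there exists an injective assignment z with z_j ∈ D'(X_j) for all j. -/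
/-!
Given an injective assignment in the pruned domains `D'`, forget the holes at `v` and keep only
the interval hulls `[prunedLo j, prunedHi j]` of the `D' j`. Bounds consistency of the precedences
makes both bounds monotone along `E`, so swapping the values of a violated precedence `(a, b)`
keeps the assignment inside the intervals. The swap strictly increases `∑ j, |P(j)| * x j`, hence
a permutation of the values maximising this sum satisfies every precedence; `x i = v` is forced
by `prunedLo i = prunedHi i = v`.
-/

open Function Set
open scoped Finset

section Sorting

variable {ι : Type*} {r : ι → ι → Prop}

lemma comp_swap_mem_Icc_of_monotone [DecidableEq ι] {lo hi : ι → ℤ}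
    (hlo : ∀ a b, r a b → lo a ≤ lo b) (hhi : ∀ a b, r a b → hi a ≤ hi b) {x : ι → ℤ}
    (hx : ∀ j, x j ∈ Icc (lo j) (hi j)) {a b : ι} (hab : r a b) (hlt : x b < x a) (j : ι) :
    x (Equiv.swap a b j) ∈ Icc (lo j) (hi j) := by
  rcases eq_or_ne j a with rfl | hja
  · simp only [Equiv.swap_apply_left]
    exact ⟨(hlo _ _ hab).trans (hx b).1, hlt.le.trans (hx j).2⟩
  rcases eq_or_ne j b with rfl | hjb
  · simp only [Equiv.swap_apply_right]
    exact ⟨(hx j).1.trans hlt.le, (hx a).2.trans (hhi _ _ hab)⟩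
  simpa [Equiv.swap_apply_of_ne_of_ne hja hjb] using hx j

lemma sum_mul_comp_swap_lt [Fintype ι] [DecidableEq ι] {w x : ι → ℤ} {a b : ι}
    (hw : w a < w b) (hx : x b < x a) : ∑ j, w j * x j < ∑ j, w j * x (Equiv.swap a b j) := by
  have hab : a ≠ b := fun h => hw.ne (h ▸ rfl)
  have hdiff : ∑ j, w j * x (Equiv.swap a b j) - ∑ j, w j * x j
      = (w b - w a) * (x a - x b) := by
    rw [← Finset.sum_sub_distrib, Fintype.sum_eq_add a b hab]
    · simp only [Equiv.swap_apply_left, Equiv.swap_apply_right]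
      ring
    · rintro c ⟨hca, hcb⟩
      simp [Equiv.swap_apply_of_ne_of_ne hca hcb]
  nlinarith

variable [Fintype ι] [IsStrictOrder ι r]

lemma card_filter_rel_lt_of_rel [DecidableRel r] {a b : ι} (hab : r a b) :
    #{c | r c a} < #{c | r c b} := by
  refine Finset.card_lt_card ((Finset.ssubset_iff_of_subset fun c => ?_).2 ⟨a, ?_⟩)
  · simpa only [Finset.mem_filter, Finset.mem_univ, true_and] using
      fun hca => _root_.trans hca hab
  · simpa using ⟨hab, irrefl a⟩

theorem exists_injective_rel_lt_of_monotone_bounds {lo hi : ι → ℤ}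
    (hlo : ∀ a b, r a b → lo a ≤ lo b) (hhi : ∀ a b, r a b → hi a ≤ hi b)
    {z : ι → ℤ} (hz : Injective z) (hzI : ∀ j, z j ∈ Icc (lo j) (hi j)) :
    ∃ x : ι → ℤ, Injective x ∧ (∀ j, x j ∈ Icc (lo j) (hi j)) ∧ ∀ a b, r a b → x a < x b := by
  classical
  let w : ι → ℤ := fun j => #{c | r c j}
  let feasible : Finset (Equiv.Perm ι) := {σ | ∀ j, z (σ j) ∈ Icc (lo j) (hi j)}
  obtain ⟨σ, hσ, hmax⟩ := feasible.exists_max_image (fun σ => ∑ j, w j * z (σ j))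
    ⟨1, by simpa [feasible] using hzI⟩
  have hσI : ∀ j, z (σ j) ∈ Icc (lo j) (hi j) := by simpa [feasible] using hσ
  refine ⟨z ∘ σ, hz.comp σ.injective, hσI, fun a b hab => ?_⟩
  by_contra! hle
  have hlt : z (σ b) < z (σ a) :=
    hle.lt_of_ne ((hz.comp σ.injective).ne fun h => irrefl a (h ▸ hab))
  have hw : w a < w b := by simpa [w] using card_filter_rel_lt_of_rel hab
  have hswap : σ * Equiv.swap a b ∈ feasible := by
    simpa [feasible] using comp_swap_mem_Icc_of_monotone hlo hhi hσI hab hlt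
  exact (hmax _ hswap).not_gt (by simpa using sum_mul_comp_swap_lt (x := z ∘ σ) hw hlt)

end Sorting

section DirectPruning

variable {ι : Type*} {E : ι → ι → Prop} {mn mx : ι → ℤ} {i : ι} {v : ℤ} {D' : ι → Set ℤ}

structure IsDirectPruning (E : ι → ι → Prop) (mn mx : ι → ℤ) (i : ι) (v : ℤ) (D' : ι → Set ℤ) :
    Prop where
  eq_self : D' i = {v}
  eq_of_pred : ∀ j, E j i → D' j = Icc (mn j) (mx j) ∩ Iic (v - 1)
  eq_of_succ : ∀ j, E i j → D' j = Icc (mn j) (mx j) ∩ Ici (v + 1)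
  eq_of_unrelated : ∀ j, j ≠ i → ¬ E j i → ¬ E i j →
    D' j = if v = mn j ∨ v = mx j then Icc (mn j) (mx j) \ {v} else Icc (mn j) (mx j)

open Classical in
noncomputable def prunedLo (E : ι → ι → Prop) (mn : ι → ℤ) (i : ι) (v : ℤ) (j : ι) : ℤ :=
  if j = i then v else if E i j then max (mn j) (v + 1) else mn j

open Classical in
noncomputable def prunedHi (E : ι → ι → Prop) (mx : ι → ℤ) (i : ι) (v : ℤ) (j : ι) : ℤ :=
  if j = i then v else if E j i then min (mx j) (v - 1) else mx j

lemma prunedLo_self : prunedLo E mn i v i = v := if_pos rfl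

lemma prunedHi_self : prunedHi E mx i v i = v := if_pos rfl

lemma Icc_pruned_subset (hvmn : mn i ≤ v) (hvmx : v ≤ mx i) (j : ι) :
    Icc (prunedLo E mn i v j) (prunedHi E mx i v j) ⊆ Icc (mn j) (mx j) := by
  unfold prunedLo prunedHi
  apply Icc_subset_Icc <;> split_ifs <;> subst_vars <;> simp_all

section

variable [IsStrictOrder ι E]

lemma prunedLo_mono (hmn : ∀ a b, E a b → mn a < mn b) (hv : mn i ≤ v) {a b : ι}
    (hab : E a b) : prunedLo E mn i v a ≤ prunedLo E mn i v b := by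
  have hmn := hmn a b hab
  have hia : E i a → E i b := fun h => _root_.trans h hab
  unfold prunedLo
  split_ifs <;> subst_vars <;> first | omega | simp_all [irrefl_of E]

lemma prunedHi_mono (hmx : ∀ a b, E a b → mx a < mx b) (hv : v ≤ mx i) {a b : ι}
    (hab : E a b) : prunedHi E mx i v a ≤ prunedHi E mx i v b := by
  have hmx := hmx a b hab
  have hbi : E b i → E a i := fun h => _root_.trans hab h
  unfold prunedHi
  split_ifs <;> subst_vars <;> first | omega | simp_all [irrefl_of E]

lemma IsDirectPruning.mem_Icc_pruned (hD : IsDirectPruning E mn mx i v D') {j : ι} {y : ℤ}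
    (hy : y ∈ D' j) : y ∈ Icc (prunedLo E mn i v j) (prunedHi E mx i v j) := by
  unfold prunedLo prunedHi
  by_cases hji : j = i
  · subst hji
    simp_all [hD.eq_self]
  by_cases hP : E j i
  · have hS : ¬ E i j := fun h => irrefl_of E i (_root_.trans h hP)
    rw [hD.eq_of_pred j hP] at hy
    simp_all
  by_cases hS : E i j
  · rw [hD.eq_of_succ j hS] at hy
    simp_all
  rw [hD.eq_of_unrelated j hji hP hS] at hy
  simp only [if_neg hji, if_neg hP, if_neg hS]
  split_ifs at hy
  exacts [hy.1, hy]

end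

lemma IsDirectPruning.mem_of_solution (hD : IsDirectPruning E mn mx i v D') {x : ι → ℤ}
    (hx : Injective x) (hxI : ∀ j, x j ∈ Icc (mn j) (mx j)) (hxE : ∀ a b, E a b → x a < x b)
    (hxi : x i = v) (j : ι) : x j ∈ D' j := by
  by_cases hji : j = i
  · simp [hji, hD.eq_self, hxi]
  by_cases hP : E j i
  · rw [hD.eq_of_pred j hP]
    exact ⟨hxI j, by have := hxE j i hP; simp; omega⟩
  by_cases hS : E i j
  · rw [hD.eq_of_succ j hS]
    exact ⟨hxI j, by have := hxE i j hS; simp; omega⟩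
  rw [hD.eq_of_unrelated j hji hP hS]
  split_ifs
  exacts [⟨hxI j, fun h => hji (hx (h.trans hxi.symm))⟩, hxI j]

end DirectPruning

theorem direct_pruning_support_iff_general
    (n : ℕ) (E : Fin n → Fin n → Prop)
    (hTrans : Transitive E) (hIrrefl : Irreflexive E)
    (mn mx : Fin n → ℤ)
    (hNonempty : ∀ j, mn j ≤ mx j)
    (hPrecBC : ∀ a b, E a b → mn a < mn b ∧ mx a < mx b)
    (i : Fin n) (v : ℤ) (hv : v = mn i ∨ v = mx i)
    (D' : Fin n → Set ℤ)
    (hD'i : D' i = {v})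
    (hD'P : ∀ j, E j i → D' j = Set.Icc (mn j) (mx j) ∩ Set.Iic (v - 1))
    (hD'S : ∀ j, E i j → D' j = Set.Icc (mn j) (mx j) ∩ Set.Ici (v + 1))
    (hD'O : ∀ j, j ≠ i → ¬ E j i → ¬ E i j →
      D' j = if v = mn j ∨ v = mx j then Set.Icc (mn j) (mx j) \ {v}
             else Set.Icc (mn j) (mx j)) :
    (∃ x : Fin n → ℤ, Function.Injective x ∧
       (∀ j, x j ∈ Set.Icc (mn j) (mx j)) ∧
       (∀ a b, E a b → x a < x b) ∧ x i = v) ↔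
    (∃ z : Fin n → ℤ, Function.Injective z ∧ ∀ j, z j ∈ D' j) := by
  have : IsStrictOrder (Fin n) E := { trans := hTrans, irrefl := hIrrefl }
  have hD : IsDirectPruning E mn mx i v D' := ⟨hD'i, hD'P, hD'S, hD'O⟩
  constructor
  · rintro ⟨x, hx, hxI, hxE, hxi⟩
    exact ⟨x, hx, hD.mem_of_solution hx hxI hxE hxi⟩
  · rintro ⟨z, hz, hzD⟩
    have hvI : v ∈ Icc (mn i) (mx i) := by
      rcases hv with rfl | rfl
      exacts [⟨le_rfl, hNonempty i⟩, ⟨hNonempty i, le_rfl⟩]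
    obtain ⟨x, hx, hxI, hxE⟩ := exists_injective_rel_lt_of_monotone_bounds
      (lo := prunedLo E mn i v) (hi := prunedHi E mx i v)
      (fun _ _ => prunedLo_mono (fun a b h => (hPrecBC a b h).1) hvI.1)
      (fun _ _ => prunedHi_mono (fun a b h => (hPrecBC a b h).2) hvI.2)
      hz (fun j => hD.mem_Icc_pruned (hzD j))
    have hxi : x i ∈ Icc v v := by simpa only [prunedLo_self, prunedHi_self] using hxI i
    exact ⟨x, hx, fun j => Icc_pruned_subset hvI.1 hvI.2 j (hxI j), hxE, le_antisymm hxi.2 hxi.1⟩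

/-- Lemma 2: assume `E` is transitive and irreflexive, all interval
domains are nonempty, the precedence constraints are bounds consistent
(`mn a < mn b` and `mx a < mx b` along every edge), and `AllDifferent` is bounds
consistent (every bound of every variable has an `AllDifferent` support).  Let
`v ∈ {mn i, mx i}` and let `D'` be the domains obtained by direct pruning of
`X_i = v`.  Then `AllDiffPrec` has a solution with `x_i = v` iff there is an
injective assignment within the pruned domains `D'`. -/
theorem direct_pruning_support_iff
    (n : ℕ) (E : Fin n → Fin n → Prop)
    (hTrans : Transitive E) (hIrrefl : Irreflexive E)
    (mn mx : Fin n → ℤ)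
    (hNonempty : ∀ j, mn j ≤ mx j)
    (hPrecBC : ∀ a b, E a b → mn a < mn b ∧ mx a < mx b)
    (hADBC : ∀ j, ∀ b ∈ ({mn j, mx j} : Set ℤ),
      ∃ y : Fin n → ℤ, Function.Injective y ∧
        (∀ k, y k ∈ Set.Icc (mn k) (mx k)) ∧ y j = b)
    (i : Fin n) (v : ℤ) (hv : v = mn i ∨ v = mx i)
    (D' : Fin n → Set ℤ)
    (hD'i : D' i = {v})
    (hD'P : ∀ j, E j i → D' j = Set.Icc (mn j) (mx j) ∩ Set.Iic (v - 1))
    (hD'S : ∀ j, E i j → D' j = Set.Icc (mn j) (mx j) ∩ Set.Ici (v + 1))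
    (hD'O : ∀ j, j ≠ i → ¬ E j i → ¬ E i j →
      D' j = if v = mn j ∨ v = mx j then Set.Icc (mn j) (mx j) \ {v}
             else Set.Icc (mn j) (mx j)) :
    (∃ x : Fin n → ℤ, Function.Injective x ∧
       (∀ j, x j ∈ Set.Icc (mn j) (mx j)) ∧
       (∀ a b, E a b → x a < x b) ∧ x i = v) ↔
    (∃ z : Fin n → ℤ, Function.Injective z ∧ ∀ j, z j ∈ D' j) :=
  direct_pruning_support_iff_general n E hTrans hIrrefl mn mx hNonempty hPrecBC i v hv D' hD'i hD'P
    hD'S hD'O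
end

section
/- Let E be a transitive and irreflexive relation on {1,…,n} and let the variables have nonempty integer interval domains with min_a < min_b and max_a < max_b for every (a,b) ∈ E (bounds consistent precedences). Let i be an index and v ∈ {min_i, max_i}, and let D' be the domains obtained by direct pruning of X_i = v. Then every D'(X_j) with j ∈ P(i) ∪ S(i) ∪ {i} is a nonempty interval, every other D'(X_j) is an interval, and for every edge (a,b) ∈ E such that D'(X_a) and D'(X_b) are nonempty, the pruned domains remain preprocessed: min D'(X_a) ≤ min D'(X_b) and max D'(X_a) ≤ max D'(X_b). -/
/-!
After direct pruning, every domain is again an integer interval: `{v}` for `i`, a cut of the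
original interval below `v` for predecessors and above `v` for successors, and for any other
variable the original interval with at most one endpoint removed. Along an edge `a → b`, the
lower bound of `a` is at most `min a + 1 ≤ min b` unless `a` is `i` or a successor of `i`; but
then `b` is a successor too (transitivity) and is cut above `v`, which keeps it ahead of `a`.
The upper bounds are handled symmetrically, and the remaining edge configurations would create
a cycle through `i`, which irreflexivity and transitivity exclude.
-/

open Set

namespace Set

variable {α : Type*} [LinearOrder α]

theorem Icc_inter_Iic (a b c : α) : Icc a b ∩ Iic c = Icc a (min b c) := by
  rw [← Ici_inter_Iic, inter_assoc, Iic_inter_Iic, Ici_inter_Iic]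

theorem Icc_inter_Ici (a b c : α) : Icc a b ∩ Ici c = Icc (max a c) b := by
  rw [← Ici_inter_Iic, inter_right_comm, Ici_inter_Ici, Ici_inter_Iic]

end Set

theorem Int.exists_Icc_eq_ite_Icc_sdiff (a b v : ℤ) :
    ∃ l u, a ≤ l ∧ l ≤ a + 1 ∧ b - 1 ≤ u ∧ u ≤ b ∧
      (if v = a ∨ v = b then Icc a b \ {v} else Icc a b) = Icc l u := by
  by_cases ha : v = a
  · exact ⟨a + 1, b, by omega, le_rfl, by omega, le_rfl,
      by rw [if_pos (Or.inl ha), ha, Icc_sdiff_left, Icc_add_one_left_eq_Ioc]⟩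
  by_cases hb : v = b
  · exact ⟨a, b - 1, le_rfl, by omega, le_rfl, by omega,
      by rw [if_pos (Or.inr hb), hb, Icc_sdiff_right, Icc_sub_one_right_eq_Ico]⟩
  exact ⟨a, b, le_rfl, by omega, by omega, le_rfl, if_neg (by tauto)⟩

section DirectPruning

variable {ι : Type*} {E : ι → ι → Prop} {mn mx : ι → ℤ} {i : ι} {v : ℤ}

/-- `IsPrunedBounds E mn mx i v j l u`: after direct pruning of `X_i = v`, the domain of `X_j`
is `[l, u]`. -/
inductive IsPrunedBounds (E : ι → ι → Prop) (mn mx : ι → ℤ) (i : ι) (v : ℤ) :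
    ι → ℤ → ℤ → Prop
  | self : IsPrunedBounds E mn mx i v i v v
  | pred {j} : E j i → IsPrunedBounds E mn mx i v j (mn j) (min (mx j) (v - 1))
  | succ {j} : E i j → IsPrunedBounds E mn mx i v j (max (mn j) (v + 1)) (mx j)
  | other {j l u} : j ≠ i → ¬ E j i → ¬ E i j → mn j ≤ l → l ≤ mn j + 1 →
      mx j - 1 ≤ u → u ≤ mx j → IsPrunedBounds E mn mx i v j l u

theorem exists_isPrunedBounds {D' : ι → Set ℤ} (hD'i : D' i = {v})
    (hD'P : ∀ j, E j i → D' j = Icc (mn j) (mx j) ∩ Iic (v - 1))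
    (hD'S : ∀ j, E i j → D' j = Icc (mn j) (mx j) ∩ Ici (v + 1))
    (hD'O : ∀ j, j ≠ i → ¬ E j i → ¬ E i j →
      D' j = if v = mn j ∨ v = mx j then Icc (mn j) (mx j) \ {v} else Icc (mn j) (mx j))
    (j : ι) : ∃ l u, D' j = Icc l u ∧ IsPrunedBounds E mn mx i v j l u := by
  by_cases hji : j = i
  · subst hji
    exact ⟨v, v, by rw [hD'i, Icc_self], .self⟩
  by_cases hP : E j i
  · exact ⟨_, _, by rw [hD'P j hP, Icc_inter_Iic], .pred hP⟩
  by_cases hS : E i j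
  · exact ⟨_, _, by rw [hD'S j hS, Icc_inter_Ici], .succ hS⟩
  obtain ⟨l, u, hl, hl', hu, hu', hD⟩ := Int.exists_Icc_eq_ite_Icc_sdiff (mn j) (mx j) v
  exact ⟨l, u, (hD'O j hji hP hS).trans hD, .other hji hP hS hl hl' hu hu'⟩

variable (hmn : ∀ a b, E a b → mn a < mn b ∧ mx a < mx b) (hv : mn i ≤ v ∧ v ≤ mx i)
include hmn hv

theorem IsPrunedBounds.le {j : ι} {l u : ℤ} (h : IsPrunedBounds E mn mx i v j l u)
    (hj : mn j ≤ mx j) (hrel : E j i ∨ E i j ∨ j = i) : l ≤ u := by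
  cases h with
  | self => exact le_rfl
  | pred hji => have := hmn j i hji; omega
  | succ hij => have := hmn i j hij; omega
  | other hne hP hS => rcases hrel with h | h | h <;> contradiction

theorem IsPrunedBounds.le_of_rel [IsTrans ι E] [Std.Irrefl E] {a b : ι}
    {la ua lb ub : ℤ} (hab : E a b) (ha : IsPrunedBounds E mn mx i v a la ua)
    (hb : IsPrunedBounds E mn mx i v b lb ub) : la ≤ lb ∧ ua ≤ ub := by
  have := hmn a b hab
  cases ha with
  | self =>
    cases hb with
    | self => exact absurd hab (irrefl _)
    | pred hbi => exact absurd (trans_of E hab hbi) (irrefl _)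
    | succ => omega
    | other _ _ hib => exact absurd hab hib
  | pred => cases hb <;> omega
  | succ hia =>
    cases hb with
    | self => exact absurd (trans_of E hia hab) (irrefl _)
    | pred hbi => exact absurd (trans_of E hia (trans_of E hab hbi)) (irrefl _)
    | succ => omega
    | other _ _ hib => exact absurd (trans_of E hia hab) hib
  | other _ hai =>
    cases hb with
    | self => exact absurd hab hai
    | pred hbi => exact absurd (trans_of E hab hbi) hai
    | succ => omega
    | other => omega

end DirectPruning

/-- with bounds consistent precedences (`mn a < mn b` and
`mx a < mx b` along every edge of the transitive irreflexive relation `E`),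
direct pruning of `X_i = v` (for `v ∈ {mn i, mx i}`) preserves the interval
structure of the domains: the pruned domain of `i`, of every predecessor and of
every successor is a nonempty interval, every other pruned domain is an
interval, and along every edge whose two endpoint domains are nonempty the
pruned domains remain preprocessed (`min ≤ min` and `max ≤ max`). -/
theorem direct_pruning_preserves_preprocessing
    (n : ℕ) (E : Fin n → Fin n → Prop)
    (hTrans : Transitive E) (hIrrefl : Irreflexive E)
    (mn mx : Fin n → ℤ)
    (hNonempty : ∀ j, mn j ≤ mx j)
    (hPrecBC : ∀ a b, E a b → mn a < mn b ∧ mx a < mx b)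
    (i : Fin n) (v : ℤ) (hv : v = mn i ∨ v = mx i)
    (D' : Fin n → Set ℤ)
    (hD'i : D' i = {v})
    (hD'P : ∀ j, E j i → D' j = Set.Icc (mn j) (mx j) ∩ Set.Iic (v - 1))
    (hD'S : ∀ j, E i j → D' j = Set.Icc (mn j) (mx j) ∩ Set.Ici (v + 1))
    (hD'O : ∀ j, j ≠ i → ¬ E j i → ¬ E i j →
      D' j = if v = mn j ∨ v = mx j then Set.Icc (mn j) (mx j) \ {v}
             else Set.Icc (mn j) (mx j)) :
    (∀ j, (E j i ∨ E i j ∨ j = i) → ∃ a b : ℤ, a ≤ b ∧ D' j = Set.Icc a b) ∧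
    (∀ j, ∃ a b : ℤ, D' j = Set.Icc a b) ∧
    (∀ a b, E a b → ∀ la ua lb ub : ℤ, la ≤ ua → lb ≤ ub →
      D' a = Set.Icc la ua → D' b = Set.Icc lb ub → la ≤ lb ∧ ua ≤ ub) := by
  have hvi : mn i ≤ v ∧ v ≤ mx i := by
    rcases hv with rfl | rfl
    exacts [⟨le_rfl, hNonempty i⟩, ⟨hNonempty i, le_rfl⟩]
  have : IsTrans (Fin n) E := ⟨fun _ _ _ => @hTrans _ _ _⟩
  have : Std.Irrefl E := ⟨hIrrefl⟩
  have hbounds := exists_isPrunedBounds hD'i hD'P hD'S hD'O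
  refine ⟨fun j hrel => ?_, fun j => ?_, fun a b hab la ua lb ub hla hlb hDa hDb => ?_⟩
  · obtain ⟨l, u, hD, hj⟩ := hbounds j
    exact ⟨l, u, hj.le hPrecBC hvi (hNonempty j) hrel, hD⟩
  · obtain ⟨l, u, hD, -⟩ := hbounds j
    exact ⟨l, u, hD⟩
  · obtain ⟨l, u, hD, ha⟩ := hbounds a
    obtain ⟨l', u', hD', hb⟩ := hbounds b
    obtain ⟨rfl, rfl⟩ := (Icc_eq_Icc_iff hla).1 (hDa.symm.trans hD)
    obtain ⟨rfl, rfl⟩ := (Icc_eq_Icc_iff hlb).1 (hDb.symm.trans hD')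
    exact ha.le_of_rel hPrecBC hvi hab hb
end

section
/- Let x be a solution of AllDiffPrec([X_1,…,X_n], E) with x_i = v for some index i. Then for every integer u ≥ v, the counting condition on successor-side intervals holds: |{j ∈ S(i) : max_j ≤ u}| + |{j ∉ S(i), j ≠ i : v ≤ min_j and max_j ≤ u}| ≤ u − v. (These are the conditions B^i_{1,u} + D^i_{v,u} ≤ u − v; in particular, if some such interval [v,u] violates the condition, then the value v has no bound support for X_i and can be pruned.) -/
/-! The successors of `i` take values above `x i = v`, and the indices counted by `D` take values
at least `v` and different from `v`; both kinds take values at most `u`. So all counted indices are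
sent injectively by `x` into the integer interval `(v, u]`, which has `u - v` elements. -/

open Finset

theorem lt_of_transGen_of_forall_lt {α β : Type*} [Preorder β] {E : α → α → Prop} {x : α → β}
    (hPrec : ∀ a b, E a b → x a < x b) {a b : α} (h : Relation.TransGen E a b) : x a < x b := by
  simpa only [Relation.transGen_eq_self] using h.lift x hPrec

theorem Int.card_le_sub_of_injOn_Ioc {α : Type*} {T : Finset α} {x : α → ℤ} {v u : ℤ}
    (hvu : v ≤ u) (hmaps : ∀ j ∈ T, x j ∈ Ioc v u) (hinj : Set.InjOn x T) :
    (#T : ℤ) ≤ u - v := by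
  have hcard : #T ≤ (u - v).toNat :=
    Int.card_Ioc v u ▸ card_le_card_of_injOn x hmaps hinj
  omega

/-- if `x` is a solution of `AllDiffPrec` with `x i = v`, then for
every `u ≥ v` the successor-side counting condition
`B^i_{1,u} + D^i_{v,u} ≤ u − v` holds, where `S` is the set of successors of `i`
(the indices reachable from `i` via edges of `E`),
`B^i_{1,u} = |{j ∈ S(i) : mx j ≤ u}|` and
`D^i_{v,u} = |{j ∉ S(i), j ≠ i : v ≤ mn j ∧ mx j ≤ u}|`. -/
theorem successor_counting_condition_of_solution
    (n : ℕ) (E : Fin n → Fin n → Prop)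
    (mn mx : Fin n → ℤ)
    (i : Fin n) (S : Finset (Fin n))
    (hS : ∀ j, j ∈ S ↔ Relation.TransGen E i j)
    (x : Fin n → ℤ)
    (hDom : ∀ j, x j ∈ Set.Icc (mn j) (mx j))
    (hInj : Function.Injective x)
    (hPrec : ∀ a b, E a b → x a < x b)
    (v : ℤ) (hxi : x i = v)
    (u : ℤ) (huv : v ≤ u) :
    ((S.filter (fun j => mx j ≤ u)).card : ℤ) +
      ((Finset.univ.filter
        (fun j => j ∉ S ∧ j ≠ i ∧ v ≤ mn j ∧ mx j ≤ u)).card : ℤ)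
      ≤ u - v := by
  set A := S.filter (fun j => mx j ≤ u)
  set B := univ.filter (fun j => j ∉ S ∧ j ≠ i ∧ v ≤ mn j ∧ mx j ≤ u)
  have hdisj : Disjoint A B :=
    disjoint_left.2 fun j hA hB => (mem_filter.1 hB).2.1 (mem_filter.1 hA).1
  have hmaps : ∀ j ∈ A ∪ B, x j ∈ Ioc v u := by
    intro j hj
    rcases mem_union.1 hj with hA | hB
    · obtain ⟨hjS, hmu⟩ := mem_filter.1 hA
      have hvx : v < x j := hxi ▸ lt_of_transGen_of_forall_lt hPrec ((hS j).1 hjS)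
      exact mem_Ioc.2 ⟨hvx, (hDom j).2.trans hmu⟩
    · obtain ⟨-, -, hji, hvm, hmu⟩ := mem_filter.1 hB
      have hxv : x j ≠ v := fun h => hji (hInj (h.trans hxi.symm))
      exact mem_Ioc.2 ⟨lt_of_le_of_ne (hvm.trans (hDom j).1) hxv.symm, (hDom j).2.trans hmu⟩
  have := Int.card_le_sub_of_injOn_Ioc huv hmaps hInj.injOn
  rwa [card_union_of_disjoint hdisj, Nat.cast_add] at this
end

section
/- Let x be a solution of AllDiffPrec([X_1,…,X_n], E) with x_i = v for some index i. Then for every integer l ≤ v, the counting condition on predecessor-side intervals holds: |{j ∈ P(i) : min_j ≥ l}| + |{j ∉ P(i), j ≠ i : l ≤ min_j and max_j ≤ v}| ≤ v − l. (These are the conditions B^i_{l,d} + D^i_{l,v} ≤ v − l, where d is an upper bound on all domains; in particular, if some such interval [l,v] violates the condition, then the value v has no bound support for X_i and can be pruned.) -/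
open Finset

theorem Relation.TransGen.lt_of_forall_lt {α β : Type*} [Preorder β] {r : α → α → Prop}
    {f : α → β} (hf : ∀ a b, r a b → f a < f b) {a b : α} (h : Relation.TransGen r a b) :
    f a < f b := by
  simpa only [Relation.transGen_eq_self] using h.lift f hf

theorem Int.card_le_sub_of_injOn_Ico {ι : Type*} {s : Finset ι} {f : ι → ℤ} {a b : ℤ}
    (hab : a ≤ b) (hf : Set.InjOn f s) (hmaps : Set.MapsTo f s (Set.Ico a b)) :
    (#s : ℤ) ≤ b - a := by
  rw [← Int.card_Ico_of_le _ _ hab]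
  exact_mod_cast card_le_card_of_injOn f (by simpa only [coe_Ico] using hmaps) hf

/-- if `x` is a solution of `AllDiffPrec` with `x i = v`, then for
every `l ≤ v` the predecessor-side counting condition
`B^i_{l,d} + D^i_{l,v} ≤ v − l` holds, where `P` is the set of predecessors of
`i` (the indices from which `i` is reachable via edges of `E`),
`B^i_{l,d} = |{j ∈ P(i) : mn j ≥ l}|` and
`D^i_{l,v} = |{j ∉ P(i), j ≠ i : l ≤ mn j ∧ mx j ≤ v}|`. -/
theorem predecessor_counting_condition_of_solution
    (n : ℕ) (E : Fin n → Fin n → Prop)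
    (mn mx : Fin n → ℤ)
    (i : Fin n) (P : Finset (Fin n))
    (hP : ∀ j, j ∈ P ↔ Relation.TransGen E j i)
    (x : Fin n → ℤ)
    (hDom : ∀ j, x j ∈ Set.Icc (mn j) (mx j))
    (hInj : Function.Injective x)
    (hPrec : ∀ a b, E a b → x a < x b)
    (v : ℤ) (hxi : x i = v)
    (l : ℤ) (hlv : l ≤ v) :
    ((P.filter (fun j => l ≤ mn j)).card : ℤ) +
      ((Finset.univ.filter
        (fun j => j ∉ P ∧ j ≠ i ∧ l ≤ mn j ∧ mx j ≤ v)).card : ℤ)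
      ≤ v - l := by
  set A := P.filter (fun j => l ≤ mn j)
  set B := univ.filter (fun j => j ∉ P ∧ j ≠ i ∧ l ≤ mn j ∧ mx j ≤ v)
  have hAB : Disjoint A B :=
    disjoint_left.2 fun j hjA hjB => (mem_filter.1 hjB).2.1 (mem_filter.1 hjA).1
  -- Predecessors take values below `v` by precedence, the others by injectivity.
  have hmaps : Set.MapsTo x ↑(A ∪ B) (Set.Ico l v) := by
    intro j hj
    obtain ⟨hmn, hmx⟩ := hDom j
    rcases mem_union.1 (mem_coe.1 hj) with hjA | hjB
    · obtain ⟨hjP, hl⟩ := mem_filter.1 hjA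
      have hlt : x j < x i := ((hP j).1 hjP).lt_of_forall_lt hPrec
      exact ⟨hl.trans hmn, hxi ▸ hlt⟩
    · obtain ⟨-, -, hji, hl, hv⟩ := mem_filter.1 hjB
      have hne : x j ≠ v := hxi ▸ hInj.ne hji
      exact ⟨hl.trans hmn, lt_of_le_of_ne (hmx.trans hv) hne⟩
  calc (#A : ℤ) + #B = #(A ∪ B) := by rw [card_union_of_disjoint hAB]; push_cast; rfl
    _ ≤ v - l := Int.card_le_sub_of_injOn_Ico hlv hInj.injOn hmaps
end

section
/- Let E be a transitive and irreflexive relation on {1,…,n}, let all variables have nonempty integer interval domains contained in [1,d], and suppose: (i) the precedence constraints are bounds consistent, i.e., min_a < min_b and max_a < max_b for every (a,b) ∈ E; (ii) the AllDifferent constraint is bounds consistent, i.e., for every j and every b ∈ {min_j, max_j} there is an injective assignment y with y_k ∈ D(X_k) for all k and y_j = b; and (iii) for every index i, every v ∈ D(X_i), every integer u with max_i + 1 ≤ u ≤ d it holds that |{j ∈ S(i) : max_j ≤ u}| + |{j ∉ S(i), j ≠ i : v ≤ min_j and max_j ≤ u}| ≤ u − v, and every integer l with 1 ≤ l ≤ min_i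 − 1 it holds that |{j ∈ P(i) : min_j ≥ l}| + |{j ∉ P(i), j ≠ i : l ≤ min_j and max_j ≤ v}| ≤ v − l. Then AllDiffPrec([X_1,…,X_n], E) is bounds consistent: for every index i and every b ∈ {min_i, max_i} there exists a solution of AllDiffPrec with x_i = b. -/
/-!
To support `X_i = min_i`, pin `X_i` to `min_i` and cut the upper bound of every predecessor of `i`
below `min_i` (`supportUpper`). The new intervals still grow along `E`, and they satisfy Hall's
condition for intervals: windows `[l, u]` that do not straddle `min_i` are counted by the
AllDifferent support `y` of `min_i`, and the others by the condition on predecessors of `i`.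
Intervals that grow along a strict order and satisfy Hall's condition have distinct
representatives increasing along it: give the interval that is least for `(lower, upper)`
lexicographically, and `E`-minimal among ties, its lower bound as value, raise the other lower
bounds past that value, and recurse. The bound `max_i` is the mirror image under `x ↦ -x`, with
the condition on successors.
-/

open Finset Function

variable {ι : Type*}

def IntervalHall (S : Finset ι) (a b : ι → ℤ) : Prop :=
  ∀ l u : ℤ, #{j ∈ S | l ≤ a j ∧ b j ≤ u} ≤ #(Icc l u)

lemma IntervalHall.le {S : Finset ι} {a b : ι → ℤ} (h : IntervalHall S a b) {j : ι} (hj : j ∈ S) :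
    a j ≤ b j := by
  have hpos : 0 < #{k ∈ S | a j ≤ a k ∧ b k ≤ b j} := card_pos.2 ⟨j, by simp [hj]⟩
  have := hpos.trans_le (h (a j) (b j))
  rw [Int.card_Icc] at this
  omega

lemma IntervalHall.of_forall_le {S : Finset ι} {a b : ι → ℤ} {lo : ℤ} (hlo : ∀ j, lo ≤ a j)
    (h : ∀ l u, lo ≤ l → #{j ∈ S | l ≤ a j ∧ b j ≤ u} ≤ #(Icc l u)) : IntervalHall S a b := by
  intro l u
  by_cases hl : lo ≤ l
  · exact h l u hl
  calc #{j ∈ S | l ≤ a j ∧ b j ≤ u}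
      = #{j ∈ S | lo ≤ a j ∧ b j ≤ u} := congrArg card (filter_congr fun j _ => by grind)
    _ ≤ #(Icc lo u) := h lo u le_rfl
    _ ≤ #(Icc l u) := card_le_card (Icc_subset_Icc_left (by omega))

section Greedy

variable {E : ι → ι → Prop} [IsStrictOrder ι E]

lemma Finset.exists_forall_not_rel {T : Finset ι} (hT : T.Nonempty) :
    ∃ j ∈ T, ∀ p ∈ T, ¬ E p j := by
  obtain ⟨⟨j, hj⟩, -, hmin⟩ :=
    (T.finite_toSet.wellFoundedOn (r := E)).has_min Set.univ ⟨⟨_, hT.choose_spec⟩, trivial⟩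
  exact ⟨j, hj, fun p hp => hmin ⟨p, hp⟩ trivial⟩

lemma exists_greedy_choice {S : Finset ι} (hS : S.Nonempty) {a b : ι → ℤ}
    (hmono : ∀ p ∈ S, ∀ q ∈ S, E p q → a p ≤ a q ∧ b p ≤ b q) :
    ∃ j₀ ∈ S, (∀ j ∈ S, a j₀ ≤ a j) ∧ (∀ j ∈ S, a j = a j₀ → b j₀ ≤ b j) ∧
      ∀ p ∈ S, ¬ E p j₀ := by
  obtain ⟨j₁, hj₁, hmin⟩ := S.exists_min_image (fun j => toLex (a j, b j)) hS
  simp only [Prod.Lex.toLex_le_toLex] at hmin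
  obtain ⟨j₀, hj₀, hE⟩ :=
    exists_forall_not_rel (E := E) (T := {j ∈ S | a j = a j₁ ∧ b j = b j₁}) ⟨j₁, by simp [hj₁]⟩
  simp only [mem_filter] at hj₀ hE
  obtain ⟨hj₀, ha, hb⟩ := hj₀
  refine ⟨j₀, hj₀, fun j hj => ?_, fun j hj haj => ?_, fun p hp hp₀ => ?_⟩
  · have := hmin j hj
    omega
  · have := hmin j hj
    omega
  · have := hmin p hp
    have := hmono p hp j₀ hj₀ hp₀
    exact hE p ⟨hp, by omega, by omega⟩ hp₀

variable [DecidableEq ι]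

lemma IntervalHall.erase_of_lexMin {S : Finset ι} {a b : ι → ℤ} (h : IntervalHall S a b)
    {j₀ : ι} (hj₀ : j₀ ∈ S) (ha : ∀ j ∈ S, a j₀ ≤ a j) (hb : ∀ j ∈ S, a j = a j₀ → b j₀ ≤ b j) :
    IntervalHall (S.erase j₀) (fun j => max (a j) (a j₀ + 1)) b := by
  intro l u
  by_cases hl : a j₀ + 2 ≤ l
  · refine le_trans (card_le_card fun j => ?_) (h l u)
    simp only [mem_filter, mem_erase]
    rintro ⟨⟨-, hj⟩, hlj, hju⟩
    exact ⟨hj, by omega, hju⟩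
  have hfilter : {j ∈ S.erase j₀ | l ≤ max (a j) (a j₀ + 1) ∧ b j ≤ u} =
      {j ∈ S.erase j₀ | b j ≤ u} := filter_congr fun j _ => by omega
  have hIcc : #(Icc (a j₀ + 1) u) ≤ #(Icc l u) := card_le_card (Icc_subset_Icc_left (by omega))
  rw [hfilter]
  by_cases hbu : b j₀ ≤ u
  · have hins : insert j₀ {j ∈ S.erase j₀ | b j ≤ u} ⊆ {j ∈ S | a j₀ ≤ a j ∧ b j ≤ u} := by
      intro j
      simp only [mem_insert, mem_filter, mem_erase]
      rintro (rfl | ⟨⟨-, hj⟩, hju⟩)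
      exacts [⟨hj₀, le_rfl, hbu⟩, ⟨hj, ha j hj, hju⟩]
    have hcard := (card_le_card hins).trans (h _ _)
    rw [card_insert_of_notMem (by simp)] at hcard
    have := h.le hj₀
    simp only [Int.card_Icc] at hcard hIcc ⊢
    omega
  · refine le_trans (card_le_card fun j => ?_) ((h (a j₀ + 1) u).trans hIcc)
    simp only [mem_filter, mem_erase]
    rintro ⟨⟨-, hj⟩, hju⟩
    refine ⟨hj, ?_, hju⟩
    rcases (ha j hj).eq_or_lt with hj' | hj'
    · exact absurd (hb j hj hj'.symm) (by omega)
    · omega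

theorem IntervalHall.exists_injOn {S : Finset ι} {a b : ι → ℤ} (h : IntervalHall S a b)
    (hmono : ∀ p ∈ S, ∀ q ∈ S, E p q → a p ≤ a q ∧ b p ≤ b q) :
    ∃ f : ι → ℤ, Set.InjOn f S ∧ (∀ j ∈ S, f j ∈ Set.Icc (a j) (b j)) ∧
      ∀ p ∈ S, ∀ q ∈ S, E p q → f p < f q := by
  induction S using Finset.strongInduction generalizing a with
  | H S ih =>
  rcases S.eq_empty_or_nonempty with rfl | hS
  · exact ⟨a, by simp⟩
  obtain ⟨j₀, hj₀, ha, hb, hE⟩ := exists_greedy_choice hS hmono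
  obtain ⟨f, hf, hfab, hfE⟩ := ih (S.erase j₀) (erase_ssubset hj₀) (h.erase_of_lexMin hj₀ ha hb)
    fun p hp q hq hpq => by
      have := hmono p (mem_of_mem_erase hp) q (mem_of_mem_erase hq) hpq
      exact ⟨max_le_max_right _ this.1, this.2⟩
  have hgt : ∀ j ∈ S.erase j₀, a j₀ < f j := fun j hj => by
    have := (hfab j hj).1
    omega
  have hupd : ∀ j ∈ S.erase j₀, update f j₀ (a j₀) j = f j := fun j hj =>
    update_of_ne (ne_of_mem_erase hj) _ _
  refine ⟨update f j₀ (a j₀), ?_, fun j hj => ?_, fun p hp q hq hpq => ?_⟩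
  · rw [← insert_erase hj₀, coe_insert, Set.injOn_insert (by simp)]
    refine ⟨hf.congr fun j hj => (hupd j hj).symm, ?_⟩
    rintro ⟨j, hj, hfj⟩
    rw [hupd j hj, update_self] at hfj
    exact (hgt j hj).ne' hfj
  · rcases eq_or_ne j j₀ with rfl | hj₀'
    · simpa using h.le hj
    · have hj' := mem_erase.2 ⟨hj₀', hj⟩
      have := hfab j hj'
      rw [hupd j hj']
      exact ⟨le_trans (le_max_left _ _) this.1, this.2⟩
  · have hq₀ : q ≠ j₀ := fun h => hE p hp (h ▸ hpq)
    have hq' := mem_erase.2 ⟨hq₀, hq⟩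
    rcases eq_or_ne p j₀ with rfl | hp₀
    · rw [update_self, hupd q hq']
      exact hgt q hq'
    · have hp' := mem_erase.2 ⟨hp₀, hp⟩
      rw [hupd p hp', hupd q hq']
      exact hfE p hp' q hq' hpq

end Greedy

section Support

variable [DecidableEq ι] {E : ι → ι → Prop} [DecidableRel E] {mn mx : ι → ℤ} {i : ι}

variable (E mn mx i) in
def supportUpper (j : ι) : ℤ :=
  if j = i then mn i else if E j i then min (mx j) (mn i - 1) else mx j

lemma supportUpper_self : supportUpper E mn mx i i = mn i := if_pos rfl

lemma supportUpper_le (hi : mn i ≤ mx i) (j : ι) : supportUpper E mn mx i j ≤ mx j := by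
  unfold supportUpper
  split_ifs <;> grind

lemma supportUpper_le_supportUpper [IsTrans ι E]
    (hPrecBC : ∀ a b, E a b → mn a < mn b ∧ mx a < mx b) (hne : ∀ j, mn j ≤ mx j)
    {p q : ι} (hpq : E p q) :
    supportUpper E mn mx i p ≤ supportUpper E mn mx i q := by
  have hp := hPrecBC p q hpq
  have hpi : E q i → E p i := fun h => _root_.trans hpq h
  have hpp : ¬ E p p := fun h => (hPrecBC p p h).1.false
  have := hne q
  unfold supportUpper
  split_ifs <;> subst_vars <;> grind

variable [Fintype ι]

lemma intervalHall_supportUpper (hPrecBC : ∀ a b, E a b → mn a < mn b ∧ mx a < mx b)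
    {lo : ℤ} (hlo : ∀ j, lo ≤ mn j) {y : ι → ℤ} (hy : Injective y)
    (hyD : ∀ k, y k ∈ Set.Icc (mn k) (mx k)) (hyi : y i = mn i)
    (hPred : ∀ v ∈ Set.Icc (mn i) (mx i), ∀ l : ℤ, lo ≤ l → l ≤ mn i - 1 →
      (#{j | E j i ∧ l ≤ mn j} : ℤ) + #{j | ¬ E j i ∧ j ≠ i ∧ l ≤ mn j ∧ mx j ≤ v} ≤ v - l) :
    IntervalHall univ mn (supportUpper E mn mx i) := by
  refine .of_forall_le hlo fun l u hl => ?_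
  have hprec : ∀ j, E j i → mn j < mn i ∧ mx j < mx i := fun j => hPrecBC j i
  by_cases hsimple : u < mn i - 1 ∨ mx i ≤ u ∨ mn i ≤ l
  -- windows that the cut at `mn i` does not affect: `y` still maps them into `[l, u]`
  · refine card_le_card_of_injOn y (fun j hj => ?_) hy.injOn
    have hj := (mem_filter.1 (mem_coe.1 hj)).2
    have := hyD j
    have := hprec j
    simp only [supportUpper, coe_Icc, Set.mem_Icc] at hj this ⊢
    split_ifs at hj <;> grind
  -- windows straddling the cut: count with the predecessor condition at the value `max u (mn i)`
  push Not at hsimple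
  obtain ⟨hu₁, hu₂, hl₂⟩ := hsimple
  set w := max u (mn i)
  set P : Finset ι := {j | E j i ∧ l ≤ mn j}
  set O : Finset ι := {j | ¬ E j i ∧ j ≠ i ∧ l ≤ mn j ∧ mx j ≤ w}
  set F : Finset ι := {j | l ≤ mn j ∧ supportUpper E mn mx i j ≤ u}
  have hsub : F ⊆ insert i (P ∪ O) := by
    intro j hj
    simp only [F, P, O, mem_filter, mem_univ, true_and, mem_insert, mem_union] at hj ⊢
    unfold supportUpper at hj
    split_ifs at hj <;> grind
  have hcount : (#P : ℤ) + #O ≤ w - l :=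
    hPred w ⟨le_max_right _ _, max_le hu₂.le ((hyD i).1.trans (hyD i).2)⟩ l hl (by omega)
  have hunion := card_union_le P O
  rw [Int.card_Icc]
  rcases hu₁.eq_or_lt with hu | hu
  · have hi : i ∉ F := by
      simp only [F, mem_filter, mem_univ, true_and]
      simp only [supportUpper, if_pos]
      omega
    have := card_le_card ((subset_insert_iff_of_notMem hi).1 hsub)
    omega
  · have := (card_le_card hsub).trans (card_insert_le _ _)
    omega

theorem exists_support_min [IsStrictOrder ι E]
    (hPrecBC : ∀ a b, E a b → mn a < mn b ∧ mx a < mx b)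
    {lo : ℤ} (hlo : ∀ j, lo ≤ mn j) {y : ι → ℤ} (hy : Injective y)
    (hyD : ∀ k, y k ∈ Set.Icc (mn k) (mx k)) (hyi : y i = mn i)
    (hPred : ∀ v ∈ Set.Icc (mn i) (mx i), ∀ l : ℤ, lo ≤ l → l ≤ mn i - 1 →
      (#{j | E j i ∧ l ≤ mn j} : ℤ) + #{j | ¬ E j i ∧ j ≠ i ∧ l ≤ mn j ∧ mx j ≤ v} ≤ v - l) :
    ∃ x : ι → ℤ, Injective x ∧ (∀ j, x j ∈ Set.Icc (mn j) (mx j)) ∧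
      (∀ a c, E a c → x a < x c) ∧ x i = mn i := by
  have hne : ∀ j, mn j ≤ mx j := fun j => (hyD j).1.trans (hyD j).2
  obtain ⟨x, hx, hxB, hxE⟩ :=
    (intervalHall_supportUpper hPrecBC hlo hy hyD hyi hPred).exists_injOn (E := E)
      fun p _ q _ hpq => ⟨(hPrecBC p q hpq).1.le, supportUpper_le_supportUpper hPrecBC hne hpq⟩
  refine ⟨x, by simpa using hx, fun j => ?_, fun a c h => hxE a (mem_univ a) c (mem_univ c) h, ?_⟩
  · have := hxB j (mem_univ j)
    exact ⟨this.1, this.2.trans (supportUpper_le (hne i) j)⟩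
  · have := hxB i (mem_univ i)
    rw [supportUpper_self] at this
    exact le_antisymm this.2 this.1

theorem exists_support_max [IsStrictOrder ι E]
    (hPrecBC : ∀ a b, E a b → mn a < mn b ∧ mx a < mx b)
    {ub : ℤ} (hub : ∀ j, mx j ≤ ub) {y : ι → ℤ} (hy : Injective y)
    (hyD : ∀ k, y k ∈ Set.Icc (mn k) (mx k)) (hyi : y i = mx i)
    (hSucc : ∀ v ∈ Set.Icc (mn i) (mx i), ∀ u : ℤ, mx i + 1 ≤ u → u ≤ ub →
      (#{j | E i j ∧ mx j ≤ u} : ℤ) + #{j | ¬ E i j ∧ j ≠ i ∧ v ≤ mn j ∧ mx j ≤ u} ≤ u - v) :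
    ∃ x : ι → ℤ, Injective x ∧ (∀ j, x j ∈ Set.Icc (mn j) (mx j)) ∧
      (∀ a c, E a c → x a < x c) ∧ x i = mx i := by
  obtain ⟨x, hx, hxD, hxE, hxi⟩ := exists_support_min (E := swap E) (i := i)
    (mn := fun j => -mx j) (mx := fun j => -mn j) (lo := -ub) (y := fun j => -y j)
    (fun a b hab => by have := hPrecBC b a hab; constructor <;> omega)
    (fun j => neg_le_neg (hub j)) (neg_injective.comp hy)
    (fun k => by have := hyD k; simp only [Set.mem_Icc] at this ⊢; omega) (by simp [hyi])
    (fun v hv l hl₁ hl₂ => by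
      have h := hSucc (-v) (by simp only [Set.mem_Icc] at hv ⊢; omega) (-l) (by omega) (by omega)
      rw [sub_neg_eq_add, neg_add_eq_sub] at h
      convert h using 3
      · exact congrArg card (filter_congr fun j _ => and_congr_right fun _ => le_neg)
      · exact congrArg card (filter_congr fun j _ => by simp only [swap]; grind))
  refine ⟨fun j => -x j, neg_injective.comp hx, fun j => ?_, fun a c h => neg_lt_neg (hxE c a h),
    by simp [hxi]⟩
  have := hxD j
  simp only [Set.mem_Icc] at this ⊢
  omega

end Support

theorem alldiffprec_bounds_consistent_of_conditions_general
    (n : ℕ) (d : ℤ) (E : Fin n → Fin n → Prop) [DecidableRel E]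
    (hTrans : Transitive E) (hIrrefl : Irreflexive E)
    (mn mx : Fin n → ℤ)
    (hRange : ∀ j, 1 ≤ mn j ∧ mx j ≤ d)
    (hPrecBC : ∀ a b, E a b → mn a < mn b ∧ mx a < mx b)
    (hADBC : ∀ j, ∀ b ∈ ({mn j, mx j} : Set ℤ),
      ∃ y : Fin n → ℤ, Function.Injective y ∧
        (∀ k, y k ∈ Set.Icc (mn k) (mx k)) ∧ y j = b)
    (hSucc : ∀ i : Fin n, ∀ v ∈ Set.Icc (mn i) (mx i), ∀ u : ℤ,
      mx i + 1 ≤ u → u ≤ d →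
      ((Finset.univ.filter (fun j => E i j ∧ mx j ≤ u)).card : ℤ) +
        ((Finset.univ.filter
          (fun j => ¬ E i j ∧ j ≠ i ∧ v ≤ mn j ∧ mx j ≤ u)).card : ℤ)
        ≤ u - v)
    (hPred : ∀ i : Fin n, ∀ v ∈ Set.Icc (mn i) (mx i), ∀ l : ℤ,
      1 ≤ l → l ≤ mn i - 1 →
      ((Finset.univ.filter (fun j => E j i ∧ l ≤ mn j)).card : ℤ) +
        ((Finset.univ.filter
          (fun j => ¬ E j i ∧ j ≠ i ∧ l ≤ mn j ∧ mx j ≤ v)).card : ℤ)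
        ≤ v - l) :
    ∀ i : Fin n, ∀ b ∈ ({mn i, mx i} : Set ℤ),
      ∃ x : Fin n → ℤ, Function.Injective x ∧
        (∀ j, x j ∈ Set.Icc (mn j) (mx j)) ∧
        (∀ a c, E a c → x a < x c) ∧ x i = b := by
  have : IsStrictOrder (Fin n) E := { trans := fun _ _ _ => @hTrans _ _ _, irrefl := hIrrefl }
  intro i b hb
  obtain ⟨y, hy, hyD, hyi⟩ := hADBC i b hb
  rcases hb with rfl | rfl
  · exact exists_support_min hPrecBC (fun j => (hRange j).1) hy hyD hyi (hPred i)
  · exact exists_support_max hPrecBC (fun j => (hRange j).2) hy hyD hyi (hSucc i)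

/-- Theorem 1, hard direction: if `E` is transitive and
irreflexive (so the successors of `i` are the `j` with `E i j` and its
predecessors the `j` with `E j i`), all nonempty interval domains are contained
in `[1,d]`, the precedence constraints and the `AllDifferent` constraint are
bounds consistent, and the counting conditions (1)–(6) hold for every variable
`i`, every value `v` in its domain and every interval `[v,u]` with
`mx i + 1 ≤ u ≤ d` and every interval `[l,v]` with `1 ≤ l ≤ mn i − 1`, then
`AllDiffPrec` is bounds consistent: every bound of every variable has a
support. -/
theorem alldiffprec_bounds_consistent_of_conditions
    (n : ℕ) (d : ℤ) (E : Fin n → Fin n → Prop) [DecidableRel E]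
    (hTrans : Transitive E) (hIrrefl : Irreflexive E)
    (mn mx : Fin n → ℤ)
    (hNonempty : ∀ j, mn j ≤ mx j)
    (hRange : ∀ j, 1 ≤ mn j ∧ mx j ≤ d)
    (hPrecBC : ∀ a b, E a b → mn a < mn b ∧ mx a < mx b)
    (hADBC : ∀ j, ∀ b ∈ ({mn j, mx j} : Set ℤ),
      ∃ y : Fin n → ℤ, Function.Injective y ∧
        (∀ k, y k ∈ Set.Icc (mn k) (mx k)) ∧ y j = b)
    (hSucc : ∀ i : Fin n, ∀ v ∈ Set.Icc (mn i) (mx i), ∀ u : ℤ,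
      mx i + 1 ≤ u → u ≤ d →
      ((Finset.univ.filter (fun j => E i j ∧ mx j ≤ u)).card : ℤ) +
        ((Finset.univ.filter
          (fun j => ¬ E i j ∧ j ≠ i ∧ v ≤ mn j ∧ mx j ≤ u)).card : ℤ)
        ≤ u - v)
    (hPred : ∀ i : Fin n, ∀ v ∈ Set.Icc (mn i) (mx i), ∀ l : ℤ,
      1 ≤ l → l ≤ mn i - 1 →
      ((Finset.univ.filter (fun j => E j i ∧ l ≤ mn j)).card : ℤ) +
        ((Finset.univ.filter
          (fun j => ¬ E j i ∧ j ≠ i ∧ l ≤ mn j ∧ mx j ≤ v)).card : ℤ)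
        ≤ v - l) :
    ∀ i : Fin n, ∀ b ∈ ({mn i, mx i} : Set ℤ),
      ∃ x : Fin n → ℤ, Function.Injective x ∧
        (∀ j, x j ∈ Set.Icc (mn j) (mx j)) ∧
        (∀ a c, E a c → x a < x c) ∧ x i = b :=
  alldiffprec_bounds_consistent_of_conditions_general n d E hTrans hIrrefl mn mx hRange hPrecBC
    hADBC hSucc hPred
end

section
/- Let the variables have nonempty integer interval domains, let L = {min_1,…,min_n} be the set of all domain lower bounds and U = {max_1,…,max_n} the set of all domain upper bounds. Let i be an index, v ∈ D(X_i), and k an integer with v + k ≥ max_i + 1, and suppose the interval [v, v+k] violates the successor-side counting conditions for i, i.e., B^i_{1,v+k} + D^i_{v,v+k} > k. Then there exists an interval [l,u] ⊆ [v, v+k] with l, u ∈ L ∪ U that also violates the conditions, and whose violation cost c_{l,u} = B^i_{1,u} + D^i_{l,u} − (u − l) satisfies c_{l,u} > l − v. -/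
/-!
Shrink `[v, v+k]` to the tightest interval around the variables it counts: `u` is the largest
upper bound among them and `X_i`, and `l` is the smallest lower bound among the counted
non-successors (or `u` if there are none). No counted variable is lost, while the length drops
by `(v + k - u) + (l - v) ≥ l - v`, so the cost exceeds `l - v ≥ 0`.
-/

open Finset

namespace ViolatedInterval

lemma exists_attained_bounds {ι : Type*} {mn mx : ι → ℤ} {v w : ℤ} {A C : Finset ι}
    {i : ι} (hi : i ∈ C) (hvi : v ≤ mx i) (hCw : ∀ j ∈ C, mx j ≤ w)
    (hAv : ∀ j ∈ A, v ≤ mn j) :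
    ∃ l u, v ≤ l ∧ l ≤ u ∧ u ≤ w ∧ l ∈ insert u (A.image mn) ∧ u ∈ C.image mx ∧
      (∀ j ∈ A, l ≤ mn j) ∧ ∀ j ∈ C, mx j ≤ u := by
  set u := C.sup' ⟨i, hi⟩ mx
  set l := (insert u (A.image mn)).min' (insert_nonempty _ _)
  have hvl : v ≤ l := by
    refine le_min' _ _ _ fun y hy => ?_
    rcases mem_insert.1 hy with rfl | hy
    · exact hvi.trans (le_sup' mx hi)
    · obtain ⟨j, hj, rfl⟩ := mem_image.1 hy
      exact hAv j hj
  have huC : u ∈ C.image mx := by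
    obtain ⟨j, hj, hju⟩ := exists_mem_eq_sup' ⟨i, hi⟩ mx
    exact mem_image.2 ⟨j, hj, hju.symm⟩
  exact ⟨l, u, hvl, min'_le _ _ (mem_insert_self _ _), sup'_le _ _ hCw, min'_mem _ _, huC,
    fun j hj => min'_le _ _ (mem_insert_of_mem (mem_image_of_mem mn hj)),
    fun j hj => le_sup' mx hj⟩

section Load

variable {ι : Type*} [Fintype ι] [DecidableEq ι] (S : Finset ι) (i : ι) (mn mx : ι → ℤ)

/-- `B^i_{1,u}` when `S = S(i)`. -/
def succBelow (u : ℤ) : Finset ι := S.filter fun j => mx j ≤ u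

/-- `D^i_{l,u}` when `S = S(i)`. -/
def othersWithin (l u : ℤ) : Finset ι :=
  univ.filter fun j => j ∉ S ∧ j ≠ i ∧ l ≤ mn j ∧ mx j ≤ u

def load (l u : ℤ) : ℤ := #(succBelow S mx u) + #(othersWithin S i mn mx l u)

variable {S i mn mx}

lemma mx_le_of_mem_succBelow_union_othersWithin {l u : ℤ} {j : ι}
    (hj : j ∈ succBelow S mx u ∪ othersWithin S i mn mx l u) : mx j ≤ u := by
  rcases mem_union.1 hj with hj | hj
  · exact (mem_filter.1 hj).2
  · exact (mem_filter.1 hj).2.2.2.2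

lemma load_le_load {l u l' u' : ℤ} (hl : ∀ j ∈ othersWithin S i mn mx l u, l' ≤ mn j)
    (hu : ∀ j ∈ succBelow S mx u ∪ othersWithin S i mn mx l u, mx j ≤ u') :
    load S i mn mx l u ≤ load S i mn mx l' u' := by
  have hB : succBelow S mx u ⊆ succBelow S mx u' := fun j hj =>
    mem_filter.2 ⟨(mem_filter.1 hj).1, hu j (mem_union_left _ hj)⟩
  have hD : othersWithin S i mn mx l u ⊆ othersWithin S i mn mx l' u' := fun j hj => by
    obtain ⟨-, hjS, hji, -⟩ := mem_filter.1 hj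
    exact mem_filter.2 ⟨mem_univ _, hjS, hji, hl j hj, hu j (mem_union_right _ hj)⟩
  unfold load
  exact_mod_cast add_le_add (card_le_card hB) (card_le_card hD)

end Load

end ViolatedInterval

open ViolatedInterval in
theorem violated_interval_at_bounds_general
    (n : ℕ)
    (mn mx : Fin n → ℤ)
    (i : Fin n) (S : Finset (Fin n))
    (v k : ℤ)
    (hv : v ∈ Set.Icc (mn i) (mx i))
    (hk : mx i + 1 ≤ v + k)
    (hviol : ((S.filter (fun j => mx j ≤ v + k)).card : ℤ) +
      ((Finset.univ.filter
        (fun j => j ∉ S ∧ j ≠ i ∧ v ≤ mn j ∧ mx j ≤ v + k)).card : ℤ) > k) :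
    ∃ l u : ℤ, v ≤ l ∧ l ≤ u ∧ u ≤ v + k ∧
      l ∈ Finset.univ.image mn ∪ Finset.univ.image mx ∧
      u ∈ Finset.univ.image mn ∪ Finset.univ.image mx ∧
      ((S.filter (fun j => mx j ≤ u)).card : ℤ) +
        ((Finset.univ.filter
          (fun j => j ∉ S ∧ j ≠ i ∧ l ≤ mn j ∧ mx j ≤ u)).card : ℤ) > u - l ∧
      ((S.filter (fun j => mx j ≤ u)).card : ℤ) +
        ((Finset.univ.filter
          (fun j => j ∉ S ∧ j ≠ i ∧ l ≤ mn j ∧ mx j ≤ u)).card : ℤ) - (u - l)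
        > l - v := by
  have hviol : load S i mn mx v (v + k) > k := hviol
  obtain ⟨l, u, hvl, hlu, huw, hl, hu, hlD, huC⟩ :=
    exists_attained_bounds (A := othersWithin S i mn mx v (v + k))
      (C := insert i (succBelow S mx (v + k) ∪ othersWithin S i mn mx v (v + k)))
      (mem_insert_self _ _) hv.2
      (fun j hj => (mem_insert.1 hj).elim (fun h => by subst h; omega)
        mx_le_of_mem_succBelow_union_othersWithin)
      (fun j hj => (mem_filter.1 hj).2.2.2.1)
  have hload : load S i mn mx v (v + k) ≤ load S i mn mx l u :=
    load_le_load hlD fun j hj => huC j (mem_insert_of_mem hj)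
  have hcost : load S i mn mx l u - (u - l) > l - v := by omega
  have hU : u ∈ univ.image mn ∪ univ.image mx :=
    mem_union_right _ (image_subset_image (subset_univ _) hu)
  have hL : l ∈ univ.image mn ∪ univ.image mx :=
    (mem_insert.1 hl).elim (· ▸ hU) fun h =>
      mem_union_left _ (image_subset_image (subset_univ _) h)
  exact ⟨l, u, hvl, hlu, huw, hL, hU, (by omega : load S i mn mx l u > u - l), hcost⟩

/-- Observation 1: let `L` (resp. `U`) be the set of all domain
lower (resp. upper) bounds, `S` the set of successors of `i`.  If the interval
`[v, v+k]` (with `v ∈ D(X_i)` and `v + k ≥ mx i + 1`) violates the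
successor-side counting conditions, i.e.
`B^i_{1,v+k} + D^i_{v,v+k} > k`, then there is a violated interval
`[l,u] ⊆ [v, v+k]` with `l, u ∈ L ∪ U` whose violation cost
`c_{l,u} = B^i_{1,u} + D^i_{l,u} − (u − l)` satisfies `c_{l,u} > l − v`. -/
theorem violated_interval_at_bounds
    (n : ℕ) (E : Fin n → Fin n → Prop)
    (mn mx : Fin n → ℤ)
    (hNonempty : ∀ j, mn j ≤ mx j)
    (i : Fin n) (S : Finset (Fin n))
    (hS : ∀ j, j ∈ S ↔ Relation.TransGen E i j)
    (v k : ℤ)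
    (hv : v ∈ Set.Icc (mn i) (mx i))
    (hk : mx i + 1 ≤ v + k)
    (hviol : ((S.filter (fun j => mx j ≤ v + k)).card : ℤ) +
      ((Finset.univ.filter
        (fun j => j ∉ S ∧ j ≠ i ∧ v ≤ mn j ∧ mx j ≤ v + k)).card : ℤ) > k) :
    ∃ l u : ℤ, v ≤ l ∧ l ≤ u ∧ u ≤ v + k ∧
      l ∈ Finset.univ.image mn ∪ Finset.univ.image mx ∧
      u ∈ Finset.univ.image mn ∪ Finset.univ.image mx ∧
      ((S.filter (fun j => mx j ≤ u)).card : ℤ) +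
        ((Finset.univ.filter
          (fun j => j ∉ S ∧ j ≠ i ∧ l ≤ mn j ∧ mx j ≤ u)).card : ℤ) > u - l ∧
      ((S.filter (fun j => mx j ≤ u)).card : ℤ) +
        ((Finset.univ.filter
          (fun j => j ∉ S ∧ j ≠ i ∧ l ≤ mn j ∧ mx j ≤ u)).card : ℤ) - (u - l)
        > l - v :=
  violated_interval_at_bounds_general n mn mx i S v k hv hk hviol
end

section
/- Let the variables have nonempty integer interval domains and let i be an index. Suppose the interval [l,u] violates the successor-side counting conditions for i with violation cost c = B^i_{1,u} + D^i_{l,u} − (u − l) ≥ 1. Then every interval [l', u] with l − (c − 1) ≤ l' ≤ l also violates the conditions, i.e., B^i_{1,u} + D^i_{l',u} > u − l'. Consequently the whole interval [l − (c−1), u] can be removed from D(X_i). -/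
/-!
The successors of `i` with `max_j ≤ u` and the non-successors whose whole domain lies in
`[l', u]` take pairwise distinct values in `[l', u]` as soon as `l' ≤ X_i ≤ u`, and so does
`X_i` itself; hence `B_{1,u} + D_{l',u} ≤ u - l'` for every such `l'`. Lowering `l` by one
lowers `u - l` by one and can only enlarge `D_{l,u}`, so a cost `c` keeps the violation alive
down to `l - (c - 1)`. For `X_i ∈ [l - (c - 1), u]` the bound at `l' = min X_i l` then
contradicts the violation.
-/

open Finset

namespace SuccessorPruning

variable {ι : Type*} [Fintype ι] [DecidableEq ι]

/-- `B^i_{1,u}`, given the successor set `S` of `i`. -/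
def succsUpTo (S : Finset ι) (mx : ι → ℤ) (u : ℤ) : Finset ι :=
  S.filter fun j => mx j ≤ u

/-- `D^i_{l,u}`, given the successor set `S` of `i`. -/
def othersIn (S : Finset ι) (i : ι) (mn mx : ι → ℤ) (l u : ℤ) : Finset ι :=
  univ.filter fun j => j ∉ S ∧ j ≠ i ∧ l ≤ mn j ∧ mx j ≤ u

variable (S : Finset ι) (i : ι) (mn mx : ι → ℤ)

theorem othersIn_subset_othersIn_of_le {l l' u : ℤ} (h : l' ≤ l) :
    othersIn S i mn mx l u ⊆ othersIn S i mn mx l' u :=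
  monotone_filter_right _ fun _ _ ⟨hS, hi, hl, hu⟩ => ⟨hS, hi, h.trans hl, hu⟩

theorem card_succsUpTo_add_card_othersIn_gt {l u c l' : ℤ}
    (hc : c = (#(succsUpTo S mx u) : ℤ) + #(othersIn S i mn mx l u) - (u - l))
    (hl' : l - (c - 1) ≤ l') (hl'l : l' ≤ l) :
    (#(succsUpTo S mx u) : ℤ) + #(othersIn S i mn mx l' u) > u - l' := by
  have := card_le_card (othersIn_subset_othersIn_of_le S i mn mx hl'l (u := u))
  omega

theorem card_succsUpTo_add_card_othersIn_le (x : ι → ℤ)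
    (hx : ∀ j, x j ∈ Set.Icc (mn j) (mx j)) (hinj : Function.Injective x)
    (hsucc : ∀ j ∈ S, x i < x j) {l u : ℤ} (hl : l ≤ x i) (hu : x i ≤ u) :
    (#(succsUpTo S mx u) : ℤ) + #(othersIn S i mn mx l u) ≤ u - l := by
  have hdisj : Disjoint (succsUpTo S mx u) (othersIn S i mn mx l u) :=
    disjoint_left.2 fun j hB hD => (mem_filter.1 hD).2.1 (mem_filter.1 hB).1
  have hi : i ∉ succsUpTo S mx u ∪ othersIn S i mn mx l u := by
    simp only [mem_union, succsUpTo, othersIn, mem_filter]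
    rintro (⟨hS, -⟩ | ⟨-, -, hne, -⟩)
    · exact (hsucc i hS).false
    · exact hne rfl
  have hmaps : ∀ j ∈ insert i (succsUpTo S mx u ∪ othersIn S i mn mx l u),
      x j ∈ Icc l u := by
    intro j hj
    simp only [mem_insert, mem_union, succsUpTo, othersIn, mem_filter, mem_univ,
      true_and] at hj
    rw [mem_Icc]
    rcases hj with rfl | ⟨hS, hmx⟩ | ⟨-, -, hmn, hmx⟩
    · exact ⟨hl, hu⟩
    · exact ⟨hl.trans (hsucc j hS).le, (hx j).2.trans hmx⟩
    · exact ⟨hmn.trans (hx j).1, (hx j).2.trans hmx⟩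
  have hcard := card_le_card_of_injOn x hmaps hinj.injOn
  rw [card_insert_of_notMem hi, card_union_of_disjoint hdisj, Int.card_Icc] at hcard
  omega

end SuccessorPruning

open SuccessorPruning in
theorem violation_cost_interval_pruning_general
    (n : ℕ) (E : Fin n → Fin n → Prop)
    (mn mx : Fin n → ℤ)
    (i : Fin n) (S : Finset (Fin n))
    (hS : ∀ j, j ∈ S ↔ Relation.TransGen E i j)
    (l u c : ℤ)
    (hc : c = ((S.filter (fun j => mx j ≤ u)).card : ℤ) +
      ((Finset.univ.filter
        (fun j => j ∉ S ∧ j ≠ i ∧ l ≤ mn j ∧ mx j ≤ u)).card : ℤ) - (u - l))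
    (hc1 : 1 ≤ c) :
    (∀ l' : ℤ, l - (c - 1) ≤ l' → l' ≤ l →
      ((S.filter (fun j => mx j ≤ u)).card : ℤ) +
        ((Finset.univ.filter
          (fun j => j ∉ S ∧ j ≠ i ∧ l' ≤ mn j ∧ mx j ≤ u)).card : ℤ)
        > u - l') ∧
    (∀ x : Fin n → ℤ, (∀ j, x j ∈ Set.Icc (mn j) (mx j)) →
      Function.Injective x → (∀ a b, E a b → x a < x b) →
      x i ∉ Set.Icc (l - (c - 1)) u) := by
  have hviol := fun l' => card_succsUpTo_add_card_othersIn_gt S i mn mx (l' := l') hc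
  refine ⟨hviol, fun x hx hinj hE ⟨hxl, hxu⟩ => ?_⟩
  have hsucc : ∀ j ∈ S, x i < x j := fun j hj => by
    simpa only [Relation.transGen_eq_self] using ((hS j).1 hj).lift x hE
  have hlow := hviol (min (x i) l) (le_min hxl (by omega)) (min_le_right _ _)
  have hupp := card_succsUpTo_add_card_othersIn_le S i mn mx x hx hinj hsucc
    (min_le_left (x i) l) hxu
  omega

/-- if the interval `[l,u]` violates the successor-side counting
conditions for variable `i` with violation cost
`c = B^i_{1,u} + D^i_{l,u} − (u − l) ≥ 1`, then every interval `[l',u]` with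
`l − (c−1) ≤ l' ≤ l` also violates the conditions, and consequently no solution
of `AllDiffPrec` assigns `X_i` a value in `[l − (c−1), u]` (the whole interval
can be removed from `D(X_i)`). -/
theorem violation_cost_interval_pruning
    (n : ℕ) (E : Fin n → Fin n → Prop)
    (mn mx : Fin n → ℤ)
    (hNonempty : ∀ j, mn j ≤ mx j)
    (i : Fin n) (S : Finset (Fin n))
    (hS : ∀ j, j ∈ S ↔ Relation.TransGen E i j)
    (l u c : ℤ) (hlu : l ≤ u)
    (hc : c = ((S.filter (fun j => mx j ≤ u)).card : ℤ) +
      ((Finset.univ.filter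
        (fun j => j ∉ S ∧ j ≠ i ∧ l ≤ mn j ∧ mx j ≤ u)).card : ℤ) - (u - l))
    (hc1 : 1 ≤ c) :
    (∀ l' : ℤ, l - (c - 1) ≤ l' → l' ≤ l →
      ((S.filter (fun j => mx j ≤ u)).card : ℤ) +
        ((Finset.univ.filter
          (fun j => j ∉ S ∧ j ≠ i ∧ l' ≤ mn j ∧ mx j ≤ u)).card : ℤ)
        > u - l') ∧
    (∀ x : Fin n → ℤ, (∀ j, x j ∈ Set.Icc (mn j) (mx j)) →
      Function.Injective x → (∀ a b, E a b → x a < x b) →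
      x i ∉ Set.Icc (l - (c - 1)) u) :=
  violation_cost_interval_pruning_general n E mn mx i S hS l u c hc hc1
end

section
/- Let N, M ≥ 1 and let a 3-CNF formula over Boolean variables x_1,…,x_N be given by clauses C_1,…,C_M, where each clause C_m consists of three literals, each literal being a pair (k, s) with k ∈ {1,…,N} and s ∈ {true, false} (s = true for the positive literal x_k, s = false for ¬x_k). Construct an AllDiffPrec instance on n = 2N + 3M integer variables as follows. For 1 ≤ i ≤ N: D(X_{2i−1}) = D(X_{2i}) = {i, N+M+i}. For 1 ≤ m ≤ M and 1 ≤ t ≤ 3: D(X_{2N+3(m−1)+t}) = {N+m, 2N+M+2m−1, 2N+M+2m}. The precedence set E contains, for each clause m and each position t with literal (k, s) in C_m: the pair (2k, 2N+3(m−1)+t) if s = true, and the pair (2k−1, 2N+3(m−1)+t) if s = false. Then AllDiffPrec([X_1,…,X_n], E) has a solution if and only if there exists a truth assignment f : {1,…,N} → {true, false} satisfying at least one literal of every clause (i.e., the 3-CNF formula is satisfiable). This is the reduction establishing that enforcing domain consistency on AllDiffPrec is NP-hard. -/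
/-! The literal variables of `x_i` share the domain `{i, N + M + i}`, so exactly one of them takes
the low value `i`; read "`X_{2i}` is low" as "`x_i` is true". The clause variables of clause `m`
can take `N + m + 1`, which lies between all low and all high literal values, or one of two values
above every literal value. Only two of the three clause variables fit above, so one of them takes
`N + m + 1`, and the literal variable preceding it must be low: its literal is satisfied.
Conversely, a satisfying assignment makes the true literal variables low and gives, in each clause,
the variable of one satisfied literal the value `N + m + 1`. -/

open Function Sum

theorem exists_eq_of_injective_of_forall_mem_triple {α : Type*} {y : Fin 3 → α}
    (hy : Injective y) {a b c : α} (h : ∀ t, y t ∈ ({a, b, c} : Set α)) : ∃ t, y t = a := by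
  classical
  by_contra! hne
  have hsub : Finset.univ.image y ⊆ {b, c} := by
    intro z hz
    obtain ⟨t, -, rfl⟩ := Finset.mem_image.mp hz
    simpa [hne t] using h t
  have := (Finset.card_le_card hsub).trans Finset.card_le_two
  rw [Finset.card_image_of_injective _ hy] at this
  simp at this

section Reduction

variable {N M : ℕ}

def literalValue (N M : ℕ) (i : Fin N) (b : Bool) : ℤ :=
  if b then (i : ℤ) + 1 else (N : ℤ) + (M : ℤ) + (i : ℤ) + 1

def clauseValue (N M : ℕ) (m : Fin M) : Fin 3 → ℤ :=
  ![(N : ℤ) + (m : ℤ) + 1, 2 * (N : ℤ) + (M : ℤ) + 2 * ((m : ℤ) + 1) - 1,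
    2 * (N : ℤ) + (M : ℤ) + 2 * ((m : ℤ) + 1)]

-- Slots `inl (i, true)` and `inr (m, 0)` carry the low values.
def slotValue (N M : ℕ) : (Fin N × Bool) ⊕ (Fin M × Fin 3) → ℤ
  | inl (i, b) => literalValue N M i b
  | inr (m, j) => clauseValue N M m j

theorem literalValue_mem (i : Fin N) (b : Bool) :
    literalValue N M i b ∈ ({(i : ℤ) + 1, (N : ℤ) + (M : ℤ) + (i : ℤ) + 1} : Set ℤ) := by
  cases b <;> simp [literalValue]

theorem clauseValue_mem (m : Fin M) (j : Fin 3) :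
    clauseValue N M m j ∈ ({(N : ℤ) + (m : ℤ) + 1,
      2 * (N : ℤ) + (M : ℤ) + 2 * ((m : ℤ) + 1) - 1,
      2 * (N : ℤ) + (M : ℤ) + 2 * ((m : ℤ) + 1)} : Set ℤ) := by
  fin_cases j <;> simp [clauseValue]

theorem literalValue_lt_clauseValue {i : Fin N} {b : Bool} {m : Fin M} {j : Fin 3}
    (h : b = true ∨ j ≠ 0) : literalValue N M i b < clauseValue N M m j := by
  have := i.isLt
  have := m.isLt
  cases b <;> fin_cases j <;> simp_all [literalValue, clauseValue] <;> omega

theorem slotValue_injective : Injective (slotValue N M) := by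
  rintro (⟨⟨i, hi⟩, b⟩ | ⟨⟨m, hm⟩, j⟩) (⟨⟨i', hi'⟩, b'⟩ | ⟨⟨m', hm'⟩, j'⟩) h <;>
    [cases b <;> cases b'; cases b <;> fin_cases j'; fin_cases j <;> cases b';
      fin_cases j <;> fin_cases j'] <;>
    simp [slotValue, literalValue, clauseValue] at h ⊢ <;> omega

def assignmentOfSolution (x : (Fin N × Bool) ⊕ (Fin M × Fin 3) → ℤ) (i : Fin N) : Bool :=
  decide (x (inl (i, true)) = (i : ℤ) + 1)

theorem assignmentOfSolution_eq_of_eq {x : (Fin N × Bool) ⊕ (Fin M × Fin 3) → ℤ}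
    (hx : Injective x) {k : Fin N} {s : Bool} (h : x (inl (k, s)) = (k : ℤ) + 1) :
    assignmentOfSolution x k = s := by
  cases s with
  | true => simpa [assignmentOfSolution] using h
  | false =>
    simp only [assignmentOfSolution, decide_eq_false_iff_not]
    intro htrue
    simpa using hx (htrue.trans h.symm)

theorem satisfiable_of_solution {C : Fin M → Fin 3 → Fin N × Bool}
    {x : (Fin N × Bool) ⊕ (Fin M × Fin 3) → ℤ} (hx : Injective x)
    (hlit : ∀ (i : Fin N) (s : Bool), x (inl (i, s)) ∈
      ({(i : ℤ) + 1, (N : ℤ) + (M : ℤ) + (i : ℤ) + 1} : Set ℤ))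
    (hclause : ∀ (m : Fin M) (t : Fin 3), x (inr (m, t)) ∈ ({(N : ℤ) + (m : ℤ) + 1,
      2 * (N : ℤ) + (M : ℤ) + 2 * ((m : ℤ) + 1) - 1,
      2 * (N : ℤ) + (M : ℤ) + 2 * ((m : ℤ) + 1)} : Set ℤ))
    (hprec : ∀ (m : Fin M) (t : Fin 3), x (inl (C m t)) < x (inr (m, t))) :
    ∃ f : Fin N → Bool, ∀ m, ∃ t, f (C m t).1 = (C m t).2 := by
  refine ⟨assignmentOfSolution x, fun m => ?_⟩
  obtain ⟨t, ht⟩ := exists_eq_of_injective_of_forall_mem_triple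
    (fun t t' h => by simpa using hx h) (hclause m)
  refine ⟨t, assignmentOfSolution_eq_of_eq hx ?_⟩
  have hlt := hprec m t
  have hk := hlit (C m t).1 (C m t).2
  rw [ht] at hlt
  have := m.isLt
  simp only [Prod.mk.eta, Set.mem_insert_iff, Set.mem_singleton_iff] at hk ⊢
  omega

-- The slot of literal `(i, s)` is low iff `f i = s`; position `t₀ m` of clause `m` gets slot `0`.
def solutionOfAssignment (f : Fin N → Bool) (t₀ : Fin M → Fin 3) :
    (Fin N × Bool) ⊕ (Fin M × Fin 3) → ℤ :=
  slotValue N M ∘ Sum.map (fun p => (p.1, f p.1 == p.2))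
    (fun q => (q.1, Equiv.swap (t₀ q.1) 0 q.2))

theorem solutionOfAssignment_injective (f : Fin N → Bool) (t₀ : Fin M → Fin 3) :
    Injective (solutionOfAssignment f t₀) := by
  refine slotValue_injective.comp (Injective.sumMap ?_ ?_)
  · rintro ⟨i, s⟩ ⟨i', s'⟩ h
    simp only [Prod.mk.injEq] at h
    obtain ⟨rfl, h⟩ := h
    cases f i <;> cases s <;> cases s' <;> simp_all
  · rintro ⟨m, t⟩ ⟨m', t'⟩ h
    simp only [Prod.mk.injEq] at h
    obtain ⟨rfl, h⟩ := h
    simpa using h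

theorem solutionOfAssignment_lt {f : Fin N → Bool} {t₀ : Fin M → Fin 3}
    {C : Fin M → Fin 3 → Fin N × Bool}
    (ht₀ : ∀ m, f (C m (t₀ m)).1 = (C m (t₀ m)).2) (m : Fin M) (t : Fin 3) :
    solutionOfAssignment f t₀ (inl (C m t)) < solutionOfAssignment f t₀ (inr (m, t)) := by
  refine literalValue_lt_clauseValue ?_
  by_cases ht : t = t₀ m
  · subst ht
    simp [ht₀ m]
  · right
    simpa [Equiv.swap_apply_eq_iff] using ht

end Reduction

theorem alldiffprec_sat_reduction_general
    (N M : ℕ)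
    (C : Fin M → Fin 3 → Fin N × Bool) :
    (∃ x : (Fin N × Bool) ⊕ (Fin M × Fin 3) → ℤ,
      Function.Injective x ∧
      (∀ i : Fin N, ∀ s : Bool,
        x (Sum.inl (i, s)) ∈
          ({(i : ℤ) + 1, (N : ℤ) + (M : ℤ) + (i : ℤ) + 1} : Set ℤ)) ∧
      (∀ m : Fin M, ∀ t : Fin 3,
        x (Sum.inr (m, t)) ∈
          ({(N : ℤ) + (m : ℤ) + 1,
            2 * (N : ℤ) + (M : ℤ) + 2 * ((m : ℤ) + 1) - 1,
            2 * (N : ℤ) + (M : ℤ) + 2 * ((m : ℤ) + 1)} : Set ℤ)) ∧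
      (∀ m : Fin M, ∀ t : Fin 3,
        x (Sum.inl (C m t)) < x (Sum.inr (m, t)))) ↔
    (∃ f : Fin N → Bool, ∀ m : Fin M, ∃ t : Fin 3, f (C m t).1 = (C m t).2) := by
  constructor
  · rintro ⟨x, hx, hlit, hclause, hprec⟩
    exact satisfiable_of_solution hx hlit hclause hprec
  · rintro ⟨f, hf⟩
    choose t₀ ht₀ using hf
    exact ⟨solutionOfAssignment f t₀, solutionOfAssignment_injective f t₀,
      fun i _ => literalValue_mem i _, fun m _ => clauseValue_mem m _,
      solutionOfAssignment_lt ht₀⟩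

/-- NP-hardness reduction from 3-SAT: given a 3-CNF formula with
`N ≥ 1` variables and `M ≥ 1` clauses, where clause `m` consists of the three
literals `C m t = (k, s)` (variable `k`, sign `s`), build the `AllDiffPrec`
instance on `2N + 3M` variables.  The truth-assignment variable `X_{2i-1}`
(resp. `X_{2i}`) is indexed by `Sum.inl (i, false)` (resp. `Sum.inl (i, true)`)
and has domain `{i, N+M+i}`; the clause variable `X_{2N+3(m-1)+t}` is indexed
by `Sum.inr (m, t)` and has domain `{N+m, 2N+M+2m-1, 2N+M+2m}` (indices `i`,
`m` written `1`-based).  The precedence set contains, for each clause `m` and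
position `t` with literal `(k, s)`, the edge from `Sum.inl (k, s)` (i.e. `X_{2k}`
if `s = true`, `X_{2k-1}` if `s = false`) to `Sum.inr (m, t)`.  Then the
`AllDiffPrec` instance has a solution iff the 3-CNF formula is satisfiable. -/
theorem alldiffprec_sat_reduction
    (N M : ℕ) (hN : 1 ≤ N) (hM : 1 ≤ M)
    (C : Fin M → Fin 3 → Fin N × Bool) :
    (∃ x : (Fin N × Bool) ⊕ (Fin M × Fin 3) → ℤ,
      Function.Injective x ∧
      (∀ i : Fin N, ∀ s : Bool,
        x (Sum.inl (i, s)) ∈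
          ({(i : ℤ) + 1, (N : ℤ) + (M : ℤ) + (i : ℤ) + 1} : Set ℤ)) ∧
      (∀ m : Fin M, ∀ t : Fin 3,
        x (Sum.inr (m, t)) ∈
          ({(N : ℤ) + (m : ℤ) + 1,
            2 * (N : ℤ) + (M : ℤ) + 2 * ((m : ℤ) + 1) - 1,
            2 * (N : ℤ) + (M : ℤ) + 2 * ((m : ℤ) + 1)} : Set ℤ)) ∧
      (∀ m : Fin M, ∀ t : Fin 3,
        x (Sum.inl (C m t)) < x (Sum.inr (m, t)))) ↔
    (∃ f : Fin N → Bool, ∀ m : Fin M, ∃ t : Fin 3, f (C m t).1 = (C m t).2) :=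
  alldiffprec_sat_reduction_general N M C
end
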